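/- arXiv:2110.15771 — 5 statements merged into one kernel-verified Lean document; each statement's English description precedes it below -/
import Mathlib

section
/- Let φ_1, …, φ_m ∈ ℝ^d, let λ_1, …, λ_m ≥ 0, and let ξ > 0. Let Φ_λ be the m×d matrix whose i-th row is √λ_i·φ_iᵀ, let K_λ := Φ_λΦ_λᵀ (so (K_λ)_{ij} = √(λ_iλ_j)·φ_iᵀφ_j), and for u ∈ ℝ^d let k_λ(u) := Φ_λ·u. Then for all indices i, j: ‖φ_i − φ_j‖²_{(ξ·I_d + Φ_λᵀΦ_λ)⁻¹} = ξ⁻¹·( (φ_iᵀφ_i + φ_jᵀφ_j − 2·φ_iᵀφ_j) − ‖k_λ(φ_i) − k_λ(φ_j)‖²_{(ξ·I_m + K_λ)⁻¹} ). -/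
open Matrix

/-! The push-through identity `Φ (ξ I + Φᵀ Φ) = (ξ I + Φ Φᵀ) Φ` gives the Woodbury-type formula
`ξ (ξ I + Φᵀ Φ)⁻¹ = I - Φᵀ (ξ I + Φ Φᵀ)⁻¹ Φ`, which moves the quadratic form from the feature
space `ℝ^d` to the sample space `ℝ^m`; there `Φ Φᵀ = K_λ` and `Φ u = k_λ(u)`. -/

namespace Matrix

variable {m n R : Type*} [Fintype m] [Fintype n]

theorem mul_smul_one_add_mul_eq [DecidableEq m] [DecidableEq n] [CommRing R]
    (A : Matrix m n R) (B : Matrix n m R) (ξ : R) :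
    A * (ξ • (1 : Matrix n n R) + B * A) = (ξ • (1 : Matrix m m R) + A * B) * A := by
  simp only [Matrix.mul_add, Matrix.add_mul, Matrix.mul_smul, Matrix.smul_mul, Matrix.mul_one,
    Matrix.one_mul, Matrix.mul_assoc]

theorem inv_smul_one_add_mul_eq [DecidableEq m] [DecidableEq n] [Field R]
    (A : Matrix m n R) (B : Matrix n m R) {ξ : R} (hξ : ξ ≠ 0)
    (hAB : IsUnit (ξ • (1 : Matrix m m R) + A * B).det) :
    (ξ • (1 : Matrix n n R) + B * A)⁻¹ =
      ξ⁻¹ • (1 - B * (ξ • (1 : Matrix m m R) + A * B)⁻¹ * A) := by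
  refine inv_eq_left_inv ?_
  have hpush : B * (ξ • 1 + A * B)⁻¹ * A * (ξ • 1 + B * A) = B * A := by
    rw [Matrix.mul_assoc, mul_smul_one_add_mul_eq, ← Matrix.mul_assoc, Matrix.mul_assoc B,
      nonsing_inv_mul _ hAB, Matrix.mul_one]
  rw [Matrix.smul_mul, Matrix.sub_mul, hpush, Matrix.one_mul, add_sub_cancel_right, smul_smul,
    inv_mul_cancel₀ hξ, one_smul]

theorem isUnit_det_smul_one_add_mul_transpose [DecidableEq m] (Φ : Matrix m n ℝ) {ξ : ℝ}
    (hξ : 0 < ξ) : IsUnit (ξ • (1 : Matrix m m ℝ) + Φ * Φᵀ).det := by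
  have hPSD : (Φ * Φᵀ).PosSemidef := by
    simpa only [conjTranspose_eq_transpose_of_trivial] using posSemidef_self_mul_conjTranspose Φ
  exact (isUnit_iff_isUnit_det _).mp ((PosDef.one.smul hξ).add_posSemidef hPSD).isUnit

theorem dotProduct_transpose_mul_mul_mulVec [CommSemiring R] (Φ : Matrix m n R)
    (M : Matrix m m R) (u : n → R) :
    u ⬝ᵥ ((Φᵀ * M * Φ) *ᵥ u) = (Φ *ᵥ u) ⬝ᵥ (M *ᵥ (Φ *ᵥ u)) := by
  rw [← mulVec_mulVec, ← mulVec_mulVec, dotProduct_mulVec, vecMul_transpose]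

end Matrix

theorem sub_dotProduct_sub_self {n R : Type*} [Fintype n] [CommRing R] (a b : n → R) :
    (a - b) ⬝ᵥ (a - b) = a ⬝ᵥ a + b ⬝ᵥ b - 2 * (a ⬝ᵥ b) := by
  rw [sub_dotProduct, dotProduct_sub, dotProduct_sub, dotProduct_comm b a]
  ring

theorem kernelized_condition_identity_general {d m : ℕ}
    (φ : Fin m → Fin d → ℝ)
    (ξ : ℝ) (hξ : 0 < ξ)
    (Philam : Matrix (Fin m) (Fin d) ℝ)
    (Klam : Matrix (Fin m) (Fin m) ℝ) (hKlam : Klam = Philam * Philamᵀ)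
    (klam : (Fin d → ℝ) → Fin m → ℝ) (hklam : ∀ u, klam u = Philam *ᵥ u) :
    ∀ i j : Fin m,
      (φ i - φ j) ⬝ᵥ
          ((ξ • (1 : Matrix (Fin d) (Fin d) ℝ) + Philamᵀ * Philam)⁻¹ *ᵥ (φ i - φ j)) =
        ξ⁻¹ * ((φ i ⬝ᵥ φ i + φ j ⬝ᵥ φ j - 2 * (φ i ⬝ᵥ φ j)) -
          (klam (φ i) - klam (φ j)) ⬝ᵥ
            ((ξ • (1 : Matrix (Fin m) (Fin m) ℝ) + Klam)⁻¹ *ᵥ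
              (klam (φ i) - klam (φ j)))) := by
  intro i j
  rw [inv_smul_one_add_mul_eq Philam Philamᵀ hξ.ne'
      (isUnit_det_smul_one_add_mul_transpose Philam hξ),
    hklam, hklam, ← mulVec_sub, hKlam, ← sub_dotProduct_sub_self, smul_mulVec, dotProduct_smul,
    sub_mulVec, one_mulVec, dotProduct_sub, dotProduct_transpose_mul_mul_mulVec, smul_eq_mul]

/-- Kernelized form of the RKHS quadratic form: with `Φ_λ` the matrix whose `i`-th row is
`√λ_i·φ_iᵀ`, `K_λ = Φ_λΦ_λᵀ`, and `k_λ(u) = Φ_λu`, one has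
`‖φ_i − φ_j‖²_{(ξI_d + Φ_λᵀΦ_λ)⁻¹}
  = ξ⁻¹((φ_iᵀφ_i + φ_jᵀφ_j − 2φ_iᵀφ_j) − ‖k_λ(φ_i) − k_λ(φ_j)‖²_{(ξI_m + K_λ)⁻¹})`. -/
theorem kernelized_condition_identity {d m : ℕ}
    (φ : Fin m → Fin d → ℝ) (lam : Fin m → ℝ) (hlam : ∀ i, 0 ≤ lam i)
    (ξ : ℝ) (hξ : 0 < ξ)
    (Philam : Matrix (Fin m) (Fin d) ℝ)
    (hPhilam : ∀ i j, Philam i j = Real.sqrt (lam i) * φ i j)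
    (Klam : Matrix (Fin m) (Fin m) ℝ) (hKlam : Klam = Philam * Philamᵀ)
    (klam : (Fin d → ℝ) → Fin m → ℝ) (hklam : ∀ u, klam u = Philam *ᵥ u) :
    ∀ i j : Fin m,
      (φ i - φ j) ⬝ᵥ
          ((ξ • (1 : Matrix (Fin d) (Fin d) ℝ) + Philamᵀ * Philam)⁻¹ *ᵥ (φ i - φ j)) =
        ξ⁻¹ * ((φ i ⬝ᵥ φ i + φ j ⬝ᵥ φ j - 2 * (φ i ⬝ᵥ φ j)) -
          (klam (φ i) - klam (φ j)) ⬝ᵥ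
            ((ξ • (1 : Matrix (Fin m) (Fin m) ℝ) + Klam)⁻¹ *ᵥ
              (klam (φ i) - klam (φ j)))) :=
  kernelized_condition_identity_general φ ξ hξ Philam Klam hKlam klam hklam
end

section
/- Let φ_1, …, φ_m ∈ ℝ^d, let λ_1, …, λ_m ≥ 0, let ξ > 0, and set M = ξ·I_d + Σ_{i=1}^m λ_i·φ_iφ_iᵀ. Then Σ_{i=1}^m λ_i·φ_iᵀM⁻¹φ_i ≤ 2·log det( I_d + ξ⁻¹·Σ_{i=1}^m λ_i·φ_iφ_iᵀ ). -/
open Matrix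

private lemma psd_smul_vecMulVec {d : ℕ} (v : Fin d → ℝ) {c : ℝ} (hc : 0 ≤ c) :
    (c • vecMulVec v v).PosSemidef := by
  have h1 : ∀ x : Fin d → ℝ, (vecMulVec v v) *ᵥ x = (v ⬝ᵥ x) • v := by
    intro x
    ext j
    simp only [mulVec, vecMulVec_apply, dotProduct, Pi.smul_apply, smul_eq_mul,
      Finset.sum_mul]
    exact Finset.sum_congr rfl fun k _ => by ring
  refine posSemidef_iff_dotProduct_mulVec.mpr ⟨?_, ?_⟩
  · ext i j
    simp [conjTranspose_apply, vecMulVec_apply, mul_comm]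
  · intro x
    have hsx : (star x : Fin d → ℝ) = x := by ext k; simp
    have h2 : star x ⬝ᵥ ((c • vecMulVec v v) *ᵥ x) = c * ((v ⬝ᵥ x) * (v ⬝ᵥ x)) := by
      rw [smul_mulVec, h1, dotProduct_smul, dotProduct_smul, hsx, dotProduct_comm]
      simp only [smul_eq_mul]
    rw [h2]
    exact mul_nonneg hc (mul_self_nonneg _)

private lemma psd_sum {d m : ℕ} (f : Fin m → Matrix (Fin d) (Fin d) ℝ)
    (h : ∀ i, (f i).PosSemidef) : (∑ i, f i).PosSemidef := by
  classical
  induction (Finset.univ : Finset (Fin m)) using Finset.induction with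
  | empty => simpa using Matrix.PosSemidef.zero
  | insert _ _ hne ih =>
      rw [Finset.sum_insert hne]
      exact (h _).add ih

/-- With `M = ξI_d + Σᵢ λᵢ φᵢφᵢᵀ`,
`Σᵢ λᵢ φᵢᵀM⁻¹φᵢ ≤ 2·log det(I_d + ξ⁻¹ Σᵢ λᵢ φᵢφᵢᵀ)`. -/
theorem sum_quadform_le_two_log_det {d m : ℕ}
    (φ : Fin m → Fin d → ℝ) (lam : Fin m → ℝ) (hlam : ∀ i, 0 ≤ lam i)
    (ξ : ℝ) (hξ : 0 < ξ)
    (M : Matrix (Fin d) (Fin d) ℝ)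
    (hM : M = ξ • (1 : Matrix (Fin d) (Fin d) ℝ) +
      ∑ i, lam i • vecMulVec (φ i) (φ i)) :
    ∑ i, lam i * (φ i ⬝ᵥ (M⁻¹ *ᵥ φ i)) ≤
      2 * Real.log
        ((1 + ξ⁻¹ • ∑ i, lam i • vecMulVec (φ i) (φ i)).det) := by
  classical
  set A : Matrix (Fin d) (Fin d) ℝ := ∑ i, lam i • vecMulVec (φ i) (φ i) with hA_def
  have hA : A.PosSemidef := psd_sum _ fun i => psd_smul_vecMulVec (φ i) (hlam i)
  have hId : (ξ • (1 : Matrix (Fin d) (Fin d) ℝ)).PosDef := by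
    refine posDef_iff_dotProduct_mulVec.mpr ⟨?_, ?_⟩
    · ext i j
      simp only [conjTranspose_apply, Matrix.smul_apply, star_trivial]
      rw [Matrix.one_apply, Matrix.one_apply]
      by_cases h : i = j <;> simp [h, eq_comm]
    · intro x hx
      have : star x ⬝ᵥ ((ξ • (1 : Matrix (Fin d) (Fin d) ℝ)) *ᵥ x) = ξ * (star x ⬝ᵥ x) := by
        rw [smul_mulVec, one_mulVec, dotProduct_smul, smul_eq_mul]
      rw [this]
      exact mul_pos hξ (dotProduct_star_self_pos_iff.mpr hx)
  have hMpd : M.PosDef := hM ▸ hId.add_posSemidef hA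
  have hH : M.IsHermitian := hMpd.isHermitian
  set μ : Fin d → ℝ := hH.eigenvalues with hμ_def
  have hμpos : ∀ j, 0 < μ j := hMpd.eigenvalues_pos
  -- eigenvalues are at least ξ
  have hμξ : ∀ j, ξ ≤ μ j := by
    intro j
    set v : Fin d → ℝ := ⇑(hH.eigenvectorBasis j) with hv_def
    have hnorm : v ⬝ᵥ v = 1 := by
      have h1 : ‖hH.eigenvectorBasis j‖ = 1 := hH.eigenvectorBasis.orthonormal.1 j
      have h2 : (inner ℝ (hH.eigenvectorBasis j) (hH.eigenvectorBasis j) : ℝ) = 1 := by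
        rw [real_inner_self_eq_norm_sq, h1]; norm_num
      rw [← h2]
      simp only [PiLp.inner_apply, RCLike.inner_apply, starRingEnd_apply, star_trivial,
        dotProduct]
      rfl
    have heig : μ j = star v ⬝ᵥ (M *ᵥ v) := by
      have := hH.eigenvalues_eq j
      simpa using this
    have hAv : 0 ≤ star v ⬝ᵥ (A *ᵥ v) := hA.dotProduct_mulVec_nonneg v
    have hstar : (star v : Fin d → ℝ) = v := by ext k; simp
    rw [hstar] at hAv
    rw [heig, hM, add_mulVec, dotProduct_add, smul_mulVec, one_mulVec,
      dotProduct_smul, smul_eq_mul, hstar, hnorm, mul_one]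
    linarith
  set U : Matrix (Fin d) (Fin d) ℝ := (hH.eigenvectorUnitary : Matrix (Fin d) (Fin d) ℝ)
    with hU_def
  have hUU : star U * U = 1 := mem_unitaryGroup_iff'.mp hH.eigenvectorUnitary.2
  have hUU' : U * star U = 1 := mem_unitaryGroup_iff.mp hH.eigenvectorUnitary.2
  have hspec : M = U * diagonal μ * star U := by
    have := hH.spectral_theorem
    simpa using this
  have hkey : diagonal μ * diagonal (fun j => (μ j)⁻¹) = 1 := by
    rw [diagonal_mul_diagonal]
    have : (fun j => μ j * (μ j)⁻¹) = fun _ => (1:ℝ) := by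
      funext j; exact mul_inv_cancel₀ (hμpos j).ne'
    rw [this, diagonal_one]
  -- inverse of M
  have hMinv : M⁻¹ = U * diagonal (fun j => (μ j)⁻¹) * star U := by
    apply inv_eq_right_inv
    rw [hspec]
    simp only [Matrix.mul_assoc]
    rw [← Matrix.mul_assoc (star U) U ((diagonal fun j => (μ j)⁻¹) * star U), hUU,
      Matrix.one_mul, ← Matrix.mul_assoc (diagonal μ), hkey, Matrix.one_mul, hUU']
  have hdetM : M.det = ∏ j, μ j := by
    have := hH.det_eq_prod_eigenvalues
    simpa using this
  -- LHS = trace (M⁻¹ * A)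
  have htr_term : ∀ i, lam i * (φ i ⬝ᵥ (M⁻¹ *ᵥ φ i)) =
      trace (M⁻¹ * (lam i • vecMulVec (φ i) (φ i))) := by
    intro i
    simp only [trace, diag_apply, mul_apply, Matrix.smul_apply, vecMulVec_apply, smul_eq_mul,
      dotProduct, mulVec, Finset.mul_sum]
    exact Finset.sum_congr rfl fun j _ => Finset.sum_congr rfl fun k _ => by ring
  have hLHS : ∑ i, lam i * (φ i ⬝ᵥ (M⁻¹ *ᵥ φ i)) = trace (M⁻¹ * A) := by
    rw [hA_def, Finset.mul_sum, trace_sum]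
    exact Finset.sum_congr rfl fun i _ => htr_term i
  have hMM : M⁻¹ * M = 1 := nonsing_inv_mul M hMpd.det_pos.ne'.isUnit
  have htrMinv : trace M⁻¹ = ∑ j, (μ j)⁻¹ := by
    rw [hMinv, trace_mul_cycle, hUU, Matrix.one_mul, trace_diagonal]
  have hAM : A = M - ξ • (1 : Matrix (Fin d) (Fin d) ℝ) := by
    rw [hM]; exact (add_sub_cancel_left _ _).symm
  have htrace_eq : trace (M⁻¹ * A) = (d : ℝ) - ξ * ∑ j, (μ j)⁻¹ := by
    rw [hAM, Matrix.mul_sub, trace_sub, hMM, trace_one, Matrix.mul_smul, Matrix.mul_one,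
      trace_smul, htrMinv]
    simp [smul_eq_mul]
  -- RHS determinant
  have hBM : (1 : Matrix (Fin d) (Fin d) ℝ) + ξ⁻¹ • A = ξ⁻¹ • M := by
    rw [hM, smul_add, smul_smul, inv_mul_cancel₀ hξ.ne', one_smul]
  have hdet : ((1 : Matrix (Fin d) (Fin d) ℝ) + ξ⁻¹ • A).det = ∏ j, ξ⁻¹ * μ j := by
    rw [hBM, det_smul, hdetM, Finset.prod_mul_distrib]
    simp [Finset.prod_const]
  have hlog : Real.log ((1 + ξ⁻¹ • A).det) = ∑ j, Real.log (ξ⁻¹ * μ j) := by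
    rw [hdet]
    exact Real.log_prod fun j _ => (mul_pos (inv_pos.mpr hξ) (hμpos j)).ne'
  rw [hLHS, htrace_eq, hlog, Finset.mul_sum]
  have hd : (d : ℝ) = ∑ _j : Fin d, (1 : ℝ) := by simp
  rw [hd, Finset.mul_sum, ← Finset.sum_sub_distrib]
  apply Finset.sum_le_sum
  intro j _
  set t : ℝ := ξ⁻¹ * μ j with ht_def
  have ht1 : 1 ≤ t := by
    have h := mul_le_mul_of_nonneg_left (hμξ j) (inv_nonneg.mpr hξ.le)
    rwa [inv_mul_cancel₀ hξ.ne'] at h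
  have ht0 : 0 < t := lt_of_lt_of_le one_pos ht1
  have htinv : ξ * (μ j)⁻¹ = t⁻¹ := by
    rw [ht_def, mul_inv, inv_inv, mul_comm]
  have hlog1 : 1 - t⁻¹ ≤ Real.log t := by
    have h := Real.log_le_sub_one_of_pos (inv_pos.mpr ht0)
    rw [Real.log_inv] at h
    linarith
  have hlog0 : 0 ≤ Real.log t := Real.log_nonneg ht1
  rw [htinv]
  linarith
end

section
/- Let m ≥ 2, let K be a real symmetric positive semidefinite m×m matrix with eigenvalues α_1 ≥ α_2 ≥ … ≥ α_m (listed with multiplicity), and let ξ > 0. Define the effective dimension d_eff := min{ j ∈ {1,…,m} : j·ξ·log m ≥ Σ_{i=j+1}^m α_i } (this set is nonempty since j = m qualifies). Then log det( I_m + ξ⁻¹·K ) ≤ d_eff · log( 2m·(1 + Trace(K)/(ξ·d_eff)) ). -/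
open Matrix

lemma aux_det {m : ℕ} (K : Matrix (Fin m) (Fin m) ℝ) (hK : K.IsHermitian) (c : ℝ) :
    (1 + c • K).det = ∏ i, (1 + c * hK.eigenvalues i) := by
  set U : Matrix (Fin m) (Fin m) ℝ := (hK.eigenvectorUnitary : Matrix (Fin m) (Fin m) ℝ) with hUdef
  have hU : U * star U = 1 := Matrix.mem_unitaryGroup_iff.mp hK.eigenvectorUnitary.2
  have hspec : K = U * Matrix.diagonal hK.eigenvalues * star U := by
    have := hK.spectral_theorem
    rwa [RCLike.ofReal_real_eq_id, Function.id_comp] at this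
  have key : 1 + c • K = U * (1 + c • Matrix.diagonal hK.eigenvalues) * star U := by
    rw [mul_add, add_mul, mul_one, hU, Matrix.mul_smul, Matrix.smul_mul, ← hspec]
  rw [key, Matrix.det_mul_right_comm, hU, one_mul]
  have : (1 : Matrix (Fin m) (Fin m) ℝ) + c • Matrix.diagonal hK.eigenvalues
      = Matrix.diagonal (fun i => 1 + c * hK.eigenvalues i) := by
    rw [← Matrix.diagonal_one, ← Matrix.diagonal_smul, ← Matrix.diagonal_add]
    rfl
  rw [this, Matrix.det_diagonal]

lemma aux_trace {m : ℕ} (K : Matrix (Fin m) (Fin m) ℝ) (hK : K.IsHermitian) :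
    K.trace = ∑ i, hK.eigenvalues i := by
  set U : Matrix (Fin m) (Fin m) ℝ := (hK.eigenvectorUnitary : Matrix (Fin m) (Fin m) ℝ) with hUdef
  have hU : star U * U = 1 := Matrix.mem_unitaryGroup_iff'.mp hK.eigenvectorUnitary.2
  have hspec : K = U * Matrix.diagonal hK.eigenvalues * star U := by
    have := hK.spectral_theorem
    rwa [RCLike.ofReal_real_eq_id, Function.id_comp] at this
  conv_lhs => rw [hspec]
  rw [Matrix.trace_mul_cycle, hU, one_mul, Matrix.trace_diagonal]

/-- Effective-dimension bound: for a real symmetric PSD `m×m` matrix `K` (`m ≥ 2`)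
with eigenvalues `α_1 ≥ … ≥ α_m` listed with multiplicity, `ξ > 0`, and
`d_eff = min{ j ∈ {1,…,m} : j·ξ·log m ≥ Σ_{i=j+1}^m α_i }`,
`log det(I_m + ξ⁻¹K) ≤ d_eff · log(2m(1 + Trace(K)/(ξ·d_eff)))`. -/
theorem effective_dimension_bound {m : ℕ} (hm : 2 ≤ m)
    (K : Matrix (Fin m) (Fin m) ℝ) (hK : K.PosSemidef)
    (ξ : ℝ) (hξ : 0 < ξ)
    (α : Fin m → ℝ) (hsort : Antitone α)
    (heig : ∃ σ : Equiv.Perm (Fin m), α = hK.isHermitian.eigenvalues ∘ σ)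
    (deff : ℕ)
    (hdeff : deff = sInf {j : ℕ | 1 ≤ j ∧ j ≤ m ∧
      (∑ i ∈ Finset.univ.filter (fun i : Fin m => j ≤ (i : ℕ)), α i) ≤
        (j : ℝ) * ξ * Real.log m}) :
    Real.log ((1 + ξ⁻¹ • K).det) ≤
      (deff : ℝ) * Real.log (2 * m * (1 + K.trace / (ξ * deff))) := by
  obtain ⟨σ, hα⟩ := heig
  have hα0 : ∀ i, 0 ≤ α i := fun i => by
    rw [hα]; exact hK.eigenvalues_nonneg _
  have hm1 : (1:ℝ) ≤ m := by exact_mod_cast Nat.one_le_of_lt hm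
  have hlogm : 0 ≤ Real.log m := Real.log_nonneg hm1
  -- the defining set is nonempty
  have hmemm : m ∈ {j : ℕ | 1 ≤ j ∧ j ≤ m ∧
      (∑ i ∈ Finset.univ.filter (fun i : Fin m => j ≤ (i : ℕ)), α i) ≤
        (j : ℝ) * ξ * Real.log m} := by
    refine ⟨by omega, le_refl m, ?_⟩
    have he : (Finset.univ.filter (fun i : Fin m => m ≤ (i : ℕ))) = ∅ := by
      apply Finset.filter_eq_empty_iff.mpr
      intro i _
      exact Nat.not_le.mpr i.isLt
    rw [he, Finset.sum_empty]
    positivity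
  have hS : deff ∈ {j : ℕ | 1 ≤ j ∧ j ≤ m ∧
      (∑ i ∈ Finset.univ.filter (fun i : Fin m => j ≤ (i : ℕ)), α i) ≤
        (j : ℝ) * ξ * Real.log m} := hdeff ▸ Nat.sInf_mem ⟨m, hmemm⟩
  obtain ⟨hd1, hdm, hdtail⟩ := hS
  have hd0 : (0:ℝ) < (deff : ℝ) := by exact_mod_cast hd1
  -- trace and determinant via eigenvalues
  have htr : K.trace = ∑ i, α i := by
    rw [aux_trace K hK.isHermitian, hα]
    exact (Equiv.sum_comp σ hK.isHermitian.eigenvalues).symm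
  have htr0 : 0 ≤ K.trace := htr ▸ Finset.sum_nonneg fun i _ => hα0 i
  set x : Fin m → ℝ := fun i => 1 + ξ⁻¹ * α i with hxdef
  have hx0 : ∀ i, 0 < x i := fun i => by
    have : 0 ≤ ξ⁻¹ * α i := mul_nonneg (inv_nonneg.mpr hξ.le) (hα0 i)
    simp only [hxdef]; linarith
  have hdet : (1 + ξ⁻¹ • K).det = ∏ i, x i := by
    simp only [hxdef]
    rw [aux_det K hK.isHermitian, hα]
    exact (Equiv.prod_comp σ (fun i => 1 + ξ⁻¹ * hK.isHermitian.eigenvalues i)).symm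
  have hlogdet : Real.log ((1 + ξ⁻¹ • K).det) = ∑ i, Real.log (x i) := by
    rw [hdet, Real.log_prod (fun i _ => (hx0 i).ne')]
  set head : Finset (Fin m) := Finset.univ.filter (fun i : Fin m => (i : ℕ) < deff) with hheaddef
  set tail : Finset (Fin m) := Finset.univ.filter (fun i : Fin m => deff ≤ (i : ℕ)) with htaildef
  have hsplit : ∑ i, Real.log (x i)
      = ∑ i ∈ tail, Real.log (x i) + ∑ i ∈ head, Real.log (x i) := by
    rw [htaildef, hheaddef]
    rw [← Finset.sum_filter_add_sum_filter_not Finset.univ (fun i : Fin m => deff ≤ (i : ℕ))]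
    congr 1
    apply Finset.sum_congr _ (fun _ _ => rfl)
    apply Finset.filter_congr
    intro i _
    simp [Nat.not_le]
  have hcard : head.card = deff := by
    have he : head = (Finset.range deff).attachFin
        (fun y hy => lt_of_lt_of_le (Finset.mem_range.mp hy) hdm) := by
      ext i
      simp [hheaddef, Finset.mem_attachFin, Finset.mem_range]
    rw [he, Finset.card_attachFin, Finset.card_range]
  -- tail bound
  have htailb : ∑ i ∈ tail, Real.log (x i) ≤ (deff : ℝ) * Real.log m := by
    calc ∑ i ∈ tail, Real.log (x i) ≤ ∑ i ∈ tail, ξ⁻¹ * α i := by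
          refine Finset.sum_le_sum fun i _ => ?_
          have h1 := Real.log_le_sub_one_of_pos (hx0 i)
          simp only [hxdef] at h1 ⊢
          linarith
      _ = ξ⁻¹ * ∑ i ∈ tail, α i := (Finset.mul_sum _ _ _).symm
      _ ≤ ξ⁻¹ * ((deff : ℝ) * ξ * Real.log m) := by
          apply mul_le_mul_of_nonneg_left _ (inv_nonneg.mpr hξ.le)
          exact hdtail
      _ = (deff : ℝ) * Real.log m := by field_simp
  -- head bound
  set T : ℝ := K.trace / (ξ * (deff : ℝ)) with hTdef
  have hT0 : 0 ≤ T := by positivity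
  have hheadsum : ∑ i ∈ head, α i ≤ K.trace := by
    rw [htr]
    exact Finset.sum_le_sum_of_subset_of_nonneg (Finset.subset_univ _)
      (fun i _ _ => hα0 i)
  have hheadb : ∑ i ∈ head, Real.log (x i) ≤ (deff : ℝ) * Real.log (1 + T) := by
    have hgm := Real.geom_mean_le_arith_mean_weighted head
      (fun _ => ((deff : ℝ))⁻¹) x (fun i _ => by positivity)
      (by rw [Finset.sum_const, hcard, nsmul_eq_mul]; field_simp)
      (fun i _ => (hx0 i).le)
    have hsum : ∑ i ∈ head, ((deff : ℝ))⁻¹ * x i ≤ 1 + T := by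
      rw [← Finset.mul_sum]
      have hxs : ∑ i ∈ head, x i = (deff : ℝ) + ξ⁻¹ * ∑ i ∈ head, α i := by
        simp only [hxdef]
        rw [Finset.sum_add_distrib, Finset.sum_const, hcard, nsmul_eq_mul, mul_one,
          Finset.mul_sum]
      rw [hxs, hTdef]
      rw [mul_add, inv_mul_cancel₀ hd0.ne']
      have : ((deff : ℝ))⁻¹ * (ξ⁻¹ * ∑ i ∈ head, α i) ≤ K.trace / (ξ * (deff : ℝ)) := by
        rw [div_eq_mul_inv, mul_inv]
        calc ((deff : ℝ))⁻¹ * (ξ⁻¹ * ∑ i ∈ head, α i)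
            = (∑ i ∈ head, α i) * (ξ⁻¹ * ((deff : ℝ))⁻¹) := by ring
          _ ≤ K.trace * (ξ⁻¹ * ((deff : ℝ))⁻¹) := by
              apply mul_le_mul_of_nonneg_right hheadsum
              positivity
      linarith
    have hprodpos : ∀ i ∈ head, (0:ℝ) < x i ^ ((deff : ℝ))⁻¹ :=
      fun i _ => Real.rpow_pos_of_pos (hx0 i) _
    have hlp : Real.log (∏ i ∈ head, x i ^ ((deff : ℝ))⁻¹)
        = ((deff : ℝ))⁻¹ * ∑ i ∈ head, Real.log (x i) := by
      rw [Real.log_prod (fun i hi => (hprodpos i hi).ne'), Finset.mul_sum]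
      exact Finset.sum_congr rfl fun i _ => Real.log_rpow (hx0 i) _
    have hmono : Real.log (∏ i ∈ head, x i ^ ((deff : ℝ))⁻¹) ≤ Real.log (1 + T) :=
      Real.log_le_log (Finset.prod_pos hprodpos) (hgm.trans hsum)
    rw [hlp] at hmono
    calc ∑ i ∈ head, Real.log (x i)
        = (deff : ℝ) * (((deff : ℝ))⁻¹ * ∑ i ∈ head, Real.log (x i)) := by
          field_simp
      _ ≤ (deff : ℝ) * Real.log (1 + T) := mul_le_mul_of_nonneg_left hmono hd0.le
  -- combine
  have h1T : (0:ℝ) < 1 + T := by linarith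
  have hmpos : (0:ℝ) < m := by linarith
  have hcomb : Real.log ((1 + ξ⁻¹ • K).det) ≤ (deff : ℝ) * Real.log ((m : ℝ) * (1 + T)) := by
    rw [hlogdet, hsplit, Real.log_mul hmpos.ne' h1T.ne', mul_add]
    exact add_le_add htailb hheadb
  refine hcomb.trans ?_
  apply mul_le_mul_of_nonneg_left _ hd0.le
  apply Real.log_le_log (by positivity)
  nlinarith
end

section
/- Let φ_1, …, φ_n ∈ ℝ^d, let λ_1, …, λ_n ≥ 0 with Σ_i λ_i = 1, let ξ > 0, and set A = ξ·I_d + Σ_{i=1}^n λ_i·φ_iφ_iᵀ. Let θ ∈ ℝ^d and let y ∈ ℝ^d with y ≠ 0. Define θ' = θ − (2·(yᵀθ)/(yᵀA⁻¹y))·A⁻¹y. Then: (i) yᵀθ' = −(yᵀθ); and (ii) (1/2)·Σ_{i=1}^n λ_i·(φ_iᵀ(θ − θ'))² ≤ 2·(yᵀθ)² / (yᵀA⁻¹y). -/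
/-!
Since `ξ > 0`, `A` is positive definite, so `q = yᵀA⁻¹y > 0` and `θ - θ' = c • A⁻¹y` with
`c = 2(yᵀθ)/q`, which gives (i) at once. For (ii), dropping `ξ‖θ - θ'‖²` bounds the weighted sum
by the `A`-quadratic form of `θ - θ'`, and that form equals `c²q = 4(yᵀθ)²/q`.
-/

open Matrix

section DesignMatrix

variable {ι m R : Type*} [Fintype ι] [Fintype m]

lemma dotProduct_sum_smul_vecMulVec_self_mulVec [CommRing R] (lam : ι → R) (φ : ι → m → R)
    (x : m → R) :
    x ⬝ᵥ ((∑ i, lam i • vecMulVec (φ i) (φ i)) *ᵥ x) = ∑ i, lam i * (φ i ⬝ᵥ x) ^ 2 := by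
  rw [sum_mulVec, dotProduct_sum]
  refine Finset.sum_congr rfl fun i _ => ?_
  rw [smul_mulVec, vecMulVec_mulVec, op_smul_eq_smul, dotProduct_smul, dotProduct_smul,
    smul_eq_mul, smul_eq_mul, dotProduct_comm x, sq]

lemma posDef_smul_one_add_sum_smul_vecMulVec_self [DecidableEq m] {lam : ι → ℝ}
    (hlam : ∀ i, 0 ≤ lam i) (φ : ι → m → ℝ) {ξ : ℝ} (hξ : 0 < ξ) :
    (ξ • (1 : Matrix m m ℝ) + ∑ i, lam i • vecMulVec (φ i) (φ i)).PosDef :=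
  (PosDef.one.smul hξ).add_posSemidef <| posSemidef_sum _ fun i _ =>
    (posSemidef_vecMulVec_self_star (φ i)).smul (hlam i)

lemma sum_mul_dotProduct_sq_le_dotProduct_mulVec [DecidableEq m] (lam : ι → ℝ)
    (φ : ι → m → ℝ) {ξ : ℝ} (hξ : 0 ≤ ξ) (x : m → ℝ) :
    ∑ i, lam i * (φ i ⬝ᵥ x) ^ 2 ≤
      x ⬝ᵥ ((ξ • (1 : Matrix m m ℝ) + ∑ i, lam i • vecMulVec (φ i) (φ i)) *ᵥ x) := by
  rw [add_mulVec, dotProduct_add, dotProduct_sum_smul_vecMulVec_self_mulVec, smul_mulVec,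
    one_mulVec, dotProduct_smul, smul_eq_mul, le_add_iff_nonneg_left]
  exact mul_nonneg hξ (dotProduct_self_star_nonneg x)

end DesignMatrix

lemma dotProduct_mulVec_smul_inv_mulVec {m R : Type*} [Fintype m] [DecidableEq m] [CommRing R]
    {A : Matrix m m R} (hA : IsUnit A.det) (c : R) (y : m → R) :
    (c • (A⁻¹ *ᵥ y)) ⬝ᵥ (A *ᵥ (c • (A⁻¹ *ᵥ y))) = c ^ 2 * (y ⬝ᵥ (A⁻¹ *ᵥ y)) := by
  rw [mulVec_smul, mulVec_mulVec, mul_nonsing_inv A hA, one_mulVec, smul_dotProduct,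
    dotProduct_smul, dotProduct_comm, smul_eq_mul, smul_eq_mul, sq, mul_assoc]

theorem counter_instance_kl_bound_general {d n : ℕ}
    (φ : Fin n → Fin d → ℝ) (lam : Fin n → ℝ)
    (hlam : ∀ i, 0 ≤ lam i)
    (ξ : ℝ) (hξ : 0 < ξ)
    (A : Matrix (Fin d) (Fin d) ℝ)
    (hA : A = ξ • (1 : Matrix (Fin d) (Fin d) ℝ) +
      ∑ i, lam i • vecMulVec (φ i) (φ i))
    (θ y : Fin d → ℝ) (hy : y ≠ 0)
    (θ' : Fin d → ℝ)
    (hθ' : θ' = θ - (2 * (y ⬝ᵥ θ) / (y ⬝ᵥ (A⁻¹ *ᵥ y))) • (A⁻¹ *ᵥ y)) :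
    y ⬝ᵥ θ' = -(y ⬝ᵥ θ) ∧
    (1 / 2) * ∑ i, lam i * (φ i ⬝ᵥ (θ - θ')) ^ 2 ≤
      2 * (y ⬝ᵥ θ) ^ 2 / (y ⬝ᵥ (A⁻¹ *ᵥ y)) := by
  have hApd : A.PosDef := hA ▸ posDef_smul_one_add_sum_smul_vecMulVec_self hlam φ hξ
  set q := y ⬝ᵥ (A⁻¹ *ᵥ y)
  have hq : 0 < q := hApd.inv.dotProduct_mulVec_pos hy
  have hdiff : θ - θ' = (2 * (y ⬝ᵥ θ) / q) • (A⁻¹ *ᵥ y) := by rw [hθ', sub_sub_cancel]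
  refine ⟨?_, ?_⟩
  · rw [hθ', dotProduct_sub, dotProduct_smul, smul_eq_mul, div_mul_cancel₀ _ hq.ne']
    ring
  · calc (1 / 2) * ∑ i, lam i * (φ i ⬝ᵥ (θ - θ')) ^ 2
        ≤ (1 / 2) * ((θ - θ') ⬝ᵥ (A *ᵥ (θ - θ'))) := by
          rw [hA]
          gcongr
          exact sum_mul_dotProduct_sq_le_dotProduct_mulVec lam φ hξ.le _
      _ = (1 / 2) * ((2 * (y ⬝ᵥ θ) / q) ^ 2 * q) := by
          rw [hdiff, dotProduct_mulVec_smul_inv_mulVec (A.isUnit_iff_isUnit_det.mp hApd.isUnit)]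
      _ = 2 * (y ⬝ᵥ θ) ^ 2 / q := by field_simp

/-- Counter-instance construction and KL computation: with
`A = ξI_d + Σᵢ λᵢ φᵢφᵢᵀ` (`λ` a probability vector), `y ≠ 0`, and
`θ' = θ − (2(yᵀθ)/(yᵀA⁻¹y))·A⁻¹y`, one has (i) `yᵀθ' = −yᵀθ`, and
(ii) `(1/2)·Σᵢ λᵢ(φᵢᵀ(θ − θ'))² ≤ 2(yᵀθ)²/(yᵀA⁻¹y)`. -/
theorem counter_instance_kl_bound {d n : ℕ}
    (φ : Fin n → Fin d → ℝ) (lam : Fin n → ℝ)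
    (hlam : ∀ i, 0 ≤ lam i) (hsum : ∑ i, lam i = 1)
    (ξ : ℝ) (hξ : 0 < ξ)
    (A : Matrix (Fin d) (Fin d) ℝ)
    (hA : A = ξ • (1 : Matrix (Fin d) (Fin d) ℝ) +
      ∑ i, lam i • vecMulVec (φ i) (φ i))
    (θ y : Fin d → ℝ) (hy : y ≠ 0)
    (θ' : Fin d → ℝ)
    (hθ' : θ' = θ - (2 * (y ⬝ᵥ θ) / (y ⬝ᵥ (A⁻¹ *ᵥ y))) • (A⁻¹ *ᵥ y)) :
    y ⬝ᵥ θ' = -(y ⬝ᵥ θ) ∧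
    (1 / 2) * ∑ i, lam i * (φ i ⬝ᵥ (θ - θ')) ^ 2 ≤
      2 * (y ⬝ᵥ θ) ^ 2 / (y ⬝ᵥ (A⁻¹ *ᵥ y)) :=
  counter_instance_kl_bound_general φ lam hlam ξ hξ A hA θ y hy θ' hθ'
end

section
/- Let X be a finite set, φ : X → ℝ^d, ξ > 0, θ ∈ ℝ^d, and let x* ∈ X and Δ_min > 0 be such that for all x ≠ x*, Δ_x := φ(x*)ᵀθ − φ(x)ᵀθ ≥ Δ_min. Let λ* be a probability vector on X (λ*_x ≥ 0, Σ_x λ*_x = 1) satisfying the D-optimal-design property max_{x ∈ X} ‖φ(x)‖²_{A(λ*)⁻¹} = Σ_{x ∈ X} λ*_x·‖φ(x)‖²_{A(λ*)⁻¹}, where A(λ) := ξ·I_d + Σ_{x ∈ X} λ_x·φ(x)φ(x)ᵀ. Then inf over probability vectors λ on X of max_{x ≠ x*} ‖φ(x*) − φ(x)‖²_{A(λ)⁻¹} / Δ_x² ≤ (8/Δ_min²) · log det( I_d + ξ⁻¹·Σ_{x ∈ X} λ*_x·φ(x)φ(x)ᵀ ). -/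
open Matrix




private lemma sum_mulVec' {m n ι : Type*} [Fintype n] (s : Finset ι)
    (M : ι → Matrix m n ℝ) (x : n → ℝ) :
    (∑ i ∈ s, M i) *ᵥ x = ∑ i ∈ s, M i *ᵥ x := by
  ext j
  simp only [mulVec, dotProduct, Finset.sum_apply, Matrix.sum_apply, Finset.sum_mul]
  exact Finset.sum_comm

private lemma dotProduct_sum' {n ι : Type*} [Fintype n] (s : Finset ι)
    (x : n → ℝ) (v : ι → n → ℝ) :
    x ⬝ᵥ (∑ i ∈ s, v i) = ∑ i ∈ s, x ⬝ᵥ v i := by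
  simp only [dotProduct, Finset.sum_apply, Finset.mul_sum]
  exact Finset.sum_comm

private lemma qf_vecMulVec {d : ℕ} (v x : Fin d → ℝ) :
    x ⬝ᵥ (vecMulVec v v *ᵥ x) = (v ⬝ᵥ x) ^ 2 := by
  simp only [dotProduct, mulVec, vecMulVec_apply, Finset.mul_sum, sq, Finset.sum_mul]
  apply Finset.sum_congr rfl; intro i _
  apply Finset.sum_congr rfl; intro j _
  ring

private lemma trace_mul_vecMulVec {d : ℕ} (B : Matrix (Fin d) (Fin d) ℝ) (v : Fin d → ℝ) :
    (B * vecMulVec v v).trace = v ⬝ᵥ (B *ᵥ v) := by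
  simp only [Matrix.trace, Matrix.diag, Matrix.mul_apply, vecMulVec_apply, dotProduct,
    mulVec, Finset.mul_sum]
  apply Finset.sum_congr rfl; intro i _
  apply Finset.sum_congr rfl; intro j _
  ring

private lemma design_posDef {d : ℕ} {X : Type*} [Fintype X] (φ : X → Fin d → ℝ)
    {ξ : ℝ} (hξ : 0 < ξ) (l : X → ℝ) (hl : ∀ x, 0 ≤ l x) :
    (ξ • (1 : Matrix (Fin d) (Fin d) ℝ) + ∑ x, l x • vecMulVec (φ x) (φ x)).PosDef := by
  have h1 : (ξ • (1 : Matrix (Fin d) (Fin d) ℝ)).PosDef := by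
    rw [smul_one_eq_diagonal]
    exact Matrix.PosDef.diagonal (fun _ => hξ)
  have h2 : (∑ x, l x • vecMulVec (φ x) (φ x)).PosSemidef := by
    apply Matrix.PosSemidef.of_dotProduct_mulVec_nonneg
    · show _ = _
      rw [conjTranspose_sum]
      apply Finset.sum_congr rfl; intro x _
      ext i j
      simp [vecMulVec_apply, mul_comm]
    · intro x
      rw [sum_mulVec', dotProduct_sum']
      apply Finset.sum_nonneg; intro x' _
      rw [smul_mulVec]
      simp only [star_trivial, dotProduct_smul, smul_eq_mul]
      exact mul_nonneg (hl x') (by rw [qf_vecMulVec]; positivity)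
  exact h1.add_posSemidef h2


private lemma trace_inv_le_log_det {d : ℕ} {A : Matrix (Fin d) (Fin d) ℝ}
    (hA : A.PosDef) {ξ : ℝ} (hξ : 0 < ξ) :
    (d : ℝ) - ξ * (A⁻¹).trace ≤ Real.log (ξ⁻¹ • A).det := by
  have hH := hA.isHermitian
  set α := hH.eigenvalues with hα
  have hαpos : ∀ i, 0 < α i := hA.eigenvalues_pos
  set U : Matrix (Fin d) (Fin d) ℝ := (hH.eigenvectorUnitary : Matrix (Fin d) (Fin d) ℝ) with hUdef
  have hUU : star U * U = 1 := by
    simp [hUdef]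
  have hUU' : U * star U = 1 := by
    simp [hUdef]
  have hspec : A = U * diagonal α * star U := by
    have := hH.spectral_theorem
    simpa using this
  have hinv : A⁻¹ = U * diagonal (fun i => (α i)⁻¹) * star U := by
    apply inv_eq_right_inv
    have e1 : (U * diagonal α * star U) * (U * diagonal (fun i => (α i)⁻¹) * star U)
        = U * (diagonal α * (star U * U) * diagonal (fun i => (α i)⁻¹)) * star U := by
      simp only [Matrix.mul_assoc]
    rw [← hspec] at e1
    rw [e1, hUU, mul_one, diagonal_mul_diagonal]
    have : (fun i => α i * (α i)⁻¹) = fun _ => (1 : ℝ) := by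
      funext i; exact mul_inv_cancel₀ (hαpos i).ne'
    rw [this, diagonal_one, mul_one, hUU']
  have htr : (A⁻¹).trace = ∑ i, (α i)⁻¹ := by
    rw [hinv, Matrix.trace_mul_cycle, hUU, Matrix.one_mul, trace_diagonal]
  have hdet : (ξ⁻¹ • A).det = ∏ i, ξ⁻¹ * α i := by
    rw [det_smul, hH.det_eq_prod_eigenvalues]
    simp [Finset.prod_mul_distrib, hα]
  rw [hdet, Real.log_prod (fun i _ => (mul_pos (inv_pos.mpr hξ) (hαpos i)).ne'), htr, Finset.mul_sum]
  have : (d : ℝ) = ∑ _i : Fin d, (1 : ℝ) := by simp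
  rw [this, ← Finset.sum_sub_distrib]
  apply Finset.sum_le_sum
  intro i _
  have h1 : Real.log (ξ * (α i)⁻¹) ≤ ξ * (α i)⁻¹ - 1 :=
    Real.log_le_sub_one_of_pos (mul_pos hξ (inv_pos.mpr (hαpos i)))
  have h2 : Real.log (ξ⁻¹ * α i) = - Real.log (ξ * (α i)⁻¹) := by
    rw [← Real.log_inv]
    congr 1
    field_simp
  linarith




/-- Bounding the hardness by the maximum information gain (Eq. (ln_det_K_lambda)):
if all suboptimal gaps are at least `Δ_min > 0` and `λ*` is a probability design
satisfying the D-optimal property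
`max_{x} ‖φ(x)‖²_{A(λ*)⁻¹} = Σ_x λ*_x ‖φ(x)‖²_{A(λ*)⁻¹}`
(with `A(λ) = ξI_d + Σ_x λ_x φ(x)φ(x)ᵀ`), then
`inf_λ max_{x ≠ x*} ‖φ(x*) − φ(x)‖²_{A(λ)⁻¹}/Δ_x²
  ≤ (8/Δ_min²)·log det(I_d + ξ⁻¹ Σ_x λ*_x φ(x)φ(x)ᵀ)`. -/
theorem hardness_le_log_det {d : ℕ} {X : Type*} [Fintype X]
    (φ : X → Fin d → ℝ) (ξ : ℝ) (hξ : 0 < ξ)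
    (θ : Fin d → ℝ) (xstar : X)
    (Δmin : ℝ) (hΔmin : 0 < Δmin)
    (hgap : ∀ x : X, x ≠ xstar → Δmin ≤ φ xstar ⬝ᵥ θ - φ x ⬝ᵥ θ)
    (lamstar : X → ℝ) (hlam0 : ∀ x, 0 ≤ lamstar x) (hlam1 : ∑ x, lamstar x = 1)
    (Astar : Matrix (Fin d) (Fin d) ℝ)
    (hAstar : Astar = ξ • (1 : Matrix (Fin d) (Fin d) ℝ) +
      ∑ x, lamstar x • vecMulVec (φ x) (φ x))
    (hDopt : Finset.univ.sup' ⟨xstar, Finset.mem_univ xstar⟩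
        (fun x => φ x ⬝ᵥ (Astar⁻¹ *ᵥ φ x)) =
      ∑ x, lamstar x * (φ x ⬝ᵥ (Astar⁻¹ *ᵥ φ x))) :
    (⨅ lam : {l : X → ℝ // (∀ x, 0 ≤ l x) ∧ ∑ x, l x = 1},
      ⨆ x : {x : X // x ≠ xstar},
        ((φ xstar - φ x.1) ⬝ᵥ
            ((ξ • (1 : Matrix (Fin d) (Fin d) ℝ) +
                ∑ x', lam.1 x' • vecMulVec (φ x') (φ x'))⁻¹ *ᵥ
              (φ xstar - φ x.1))) /
          (φ xstar ⬝ᵥ θ - φ x.1 ⬝ᵥ θ) ^ 2) ≤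
      (8 / Δmin ^ 2) *
        Real.log ((1 + ξ⁻¹ • ∑ x, lamstar x • vecMulVec (φ x) (φ x)).det) := by
  classical
  have hquad : ∀ (l : X → ℝ), (∀ x, 0 ≤ l x) → ∀ v : Fin d → ℝ,
      0 ≤ v ⬝ᵥ ((ξ • (1 : Matrix (Fin d) (Fin d) ℝ) +
        ∑ x', l x' • vecMulVec (φ x') (φ x'))⁻¹ *ᵥ v) := by
    intro l hl v
    have := (design_posDef φ hξ l hl).inv.posSemidef.dotProduct_mulVec_nonneg v
    simpa using this
  have hApd : Astar.PosDef := by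
    rw [hAstar]; exact design_posDef φ hξ lamstar hlam0
  have hqf : ∀ v : Fin d → ℝ, 0 ≤ v ⬝ᵥ (Astar⁻¹ *ᵥ v) := by
    intro v
    have := hApd.inv.posSemidef.dotProduct_mulVec_nonneg v
    simpa using this
  have hS0 : 0 ≤ ∑ x, lamstar x * (φ x ⬝ᵥ (Astar⁻¹ *ᵥ φ x)) :=
    Finset.sum_nonneg fun x _ => mul_nonneg (hlam0 x) (hqf _)
  -- S = trace (Astar⁻¹ * M)
  have hStr : ∑ x, lamstar x * (φ x ⬝ᵥ (Astar⁻¹ *ᵥ φ x))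
      = (Astar⁻¹ * ∑ x, lamstar x • vecMulVec (φ x) (φ x)).trace := by
    rw [Matrix.mul_sum, Matrix.trace_sum]
    apply Finset.sum_congr rfl; intro x _
    rw [Matrix.mul_smul, Matrix.trace_smul, trace_mul_vecMulVec, smul_eq_mul]
  have hdetu : IsUnit Astar.det := hApd.det_pos.ne'.isUnit
  have hinvM : Astar⁻¹ * (∑ x, lamstar x • vecMulVec (φ x) (φ x))
      = 1 - ξ • Astar⁻¹ := by
    have hMeq : (∑ x, lamstar x • vecMulVec (φ x) (φ x))
        = Astar - ξ • (1 : Matrix (Fin d) (Fin d) ℝ) := by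
      rw [hAstar]; abel
    rw [hMeq, Matrix.mul_sub, Matrix.nonsing_inv_mul _ hdetu, Matrix.mul_smul,
      Matrix.mul_one]
  have htr2 : (Astar⁻¹ * ∑ x, lamstar x • vecMulVec (φ x) (φ x)).trace
      = (d : ℝ) - ξ * Astar⁻¹.trace := by
    rw [hinvM, trace_sub, trace_one, trace_smul, smul_eq_mul]
    simp
  have hdetarg : ξ⁻¹ • Astar = 1 + ξ⁻¹ • ∑ x, lamstar x • vecMulVec (φ x) (φ x) := by
    rw [hAstar, smul_add, smul_smul, inv_mul_cancel₀ hξ.ne', one_smul]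
  have hSL : ∑ x, lamstar x * (φ x ⬝ᵥ (Astar⁻¹ *ᵥ φ x))
      ≤ Real.log ((1 + ξ⁻¹ • ∑ x, lamstar x • vecMulVec (φ x) (φ x)).det) := by
    rw [hStr, htr2, ← hdetarg]
    exact trace_inv_le_log_det hApd hξ
  have hL0 : 0 ≤ Real.log ((1 + ξ⁻¹ • ∑ x, lamstar x • vecMulVec (φ x) (φ x)).det) :=
    le_trans hS0 hSL
  have key : ∀ x : X, φ x ⬝ᵥ (Astar⁻¹ *ᵥ φ x)
      ≤ ∑ x', lamstar x' * (φ x' ⬝ᵥ (Astar⁻¹ *ᵥ φ x')) := by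
    intro x
    rw [← hDopt]
    exact Finset.le_sup' (fun x => φ x ⬝ᵥ (Astar⁻¹ *ᵥ φ x)) (Finset.mem_univ x)
  have hbound : ∀ x : {x : X // x ≠ xstar},
      ((φ xstar - φ x.1) ⬝ᵥ (Astar⁻¹ *ᵥ (φ xstar - φ x.1))) /
          (φ xstar ⬝ᵥ θ - φ x.1 ⬝ᵥ θ) ^ 2
        ≤ (8 / Δmin ^ 2) *
          Real.log ((1 + ξ⁻¹ • ∑ x, lamstar x • vecMulVec (φ x) (φ x)).det) := by
    rintro ⟨x, hx⟩
    have hgx := hgap x hx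
    have hnum : (φ xstar - φ x) ⬝ᵥ (Astar⁻¹ *ᵥ (φ xstar - φ x))
        ≤ 4 * ∑ x', lamstar x' * (φ x' ⬝ᵥ (Astar⁻¹ *ᵥ φ x')) := by
      have hplus := hqf (φ xstar + φ x)
      have hexp : (φ xstar - φ x) ⬝ᵥ (Astar⁻¹ *ᵥ (φ xstar - φ x))
          + (φ xstar + φ x) ⬝ᵥ (Astar⁻¹ *ᵥ (φ xstar + φ x))
          = 2 * (φ xstar ⬝ᵥ (Astar⁻¹ *ᵥ φ xstar)) + 2 * (φ x ⬝ᵥ (Astar⁻¹ *ᵥ φ x)) := by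
        simp only [Matrix.mulVec_add, Matrix.mulVec_sub, dotProduct_add, dotProduct_sub,
          sub_dotProduct, add_dotProduct]
        ring
      have h1 := key xstar
      have h2 := key x
      linarith
    have hden : Δmin ^ 2 ≤ (φ xstar ⬝ᵥ θ - φ x ⬝ᵥ θ) ^ 2 := by nlinarith
    have hnum0 : 0 ≤ (φ xstar - φ x) ⬝ᵥ (Astar⁻¹ *ᵥ (φ xstar - φ x)) := hqf _
    calc ((φ xstar - φ x) ⬝ᵥ (Astar⁻¹ *ᵥ (φ xstar - φ x))) /
            (φ xstar ⬝ᵥ θ - φ x ⬝ᵥ θ) ^ 2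
        ≤ (4 * ∑ x', lamstar x' * (φ x' ⬝ᵥ (Astar⁻¹ *ᵥ φ x'))) / Δmin ^ 2 :=
          div_le_div₀ (by positivity) hnum (by positivity) hden
      _ ≤ (8 * Real.log ((1 + ξ⁻¹ • ∑ x, lamstar x • vecMulVec (φ x) (φ x)).det))
            / Δmin ^ 2 := by
          gcongr
          linarith
      _ = (8 / Δmin ^ 2) *
            Real.log ((1 + ξ⁻¹ • ∑ x, lamstar x • vecMulVec (φ x) (φ x)).det) := by
          ring
  refine ciInf_le_of_le ?_ ⟨lamstar, hlam0, hlam1⟩ ?_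
  · refine ⟨0, ?_⟩
    rintro v ⟨lam, rfl⟩
    apply Real.iSup_nonneg
    intro x
    exact div_nonneg (hquad lam.1 lam.2.1 _) (sq_nonneg _)
  · have hmat : (ξ • (1 : Matrix (Fin d) (Fin d) ℝ) +
        ∑ x', lamstar x' • vecMulVec (φ x') (φ x')) = Astar := hAstar.symm
    refine Real.iSup_le (fun x => ?_) (mul_nonneg (by positivity) hL0)
    show ((φ xstar - φ x.1) ⬝ᵥ
        ((ξ • (1 : Matrix (Fin d) (Fin d) ℝ) +
            ∑ x', lamstar x' • vecMulVec (φ x') (φ x'))⁻¹ *ᵥ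
          (φ xstar - φ x.1))) /
        (φ xstar ⬝ᵥ θ - φ x.1 ⬝ᵥ θ) ^ 2 ≤ _
    rw [hmat]
    exact hbound x
end
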